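/- The symmetry-broken Kepler Hamiltonians I₁ = ((u₁² − κ²)(p₁/m)² − (u₂² − κ²)(p₂/n)²)/(u₁² − u₂²) + α/(u₁ + u₂) and I₂ = (−u₂²(u₁² − κ²)(p₁/m)² + u₁²(u₂² − κ²)(p₂/n)²)/(u₁² − u₂²) + αu₁u₂/(u₁ + u₂) Poisson-commute for arbitrary nonzero constants m, n. -/

import Mathlib

/-- Canonical Poisson bracket of two functions on `T*ℝ²` with canonical
coordinates `(u₁, u₂, p₁, p₂)`. -/
noncomputable def poissonBracket (F G : ℝ → ℝ → ℝ → ℝ → ℝ) (u1 u2 p1 p2 : ℝ) : ℝ :=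
  deriv (fun x => F x u2 p1 p2) u1 * deriv (fun x => G u1 u2 x p2) p1
  - deriv (fun x => F u1 u2 x p2) p1 * deriv (fun x => G x u2 p1 p2) u1
  + deriv (fun x => F u1 x p1 p2) u2 * deriv (fun x => G u1 u2 p1 x) p2
  - deriv (fun x => F u1 u2 p1 x) p2 * deriv (fun x => G u1 x p1 p2) u2

/-- Symmetry-broken Kepler integral `I₁` with momenta rescaled by `m`, `n`. -/
noncomputable def keplerI1mn (κ α m n : ℝ) : ℝ → ℝ → ℝ → ℝ → ℝ := fun u1 u2 p1 p2 =>
  ((u1 ^ 2 - κ ^ 2) * (p1 / m) ^ 2 - (u2 ^ 2 - κ ^ 2) * (p2 / n) ^ 2)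
      / (u1 ^ 2 - u2 ^ 2) + α / (u1 + u2)

/-- Symmetry-broken Kepler integral `I₂` with momenta rescaled by `m`, `n`. -/
noncomputable def keplerI2mn (κ α m n : ℝ) : ℝ → ℝ → ℝ → ℝ → ℝ := fun u1 u2 p1 p2 =>
  (-u2 ^ 2 * (u1 ^ 2 - κ ^ 2) * (p1 / m) ^ 2 + u1 ^ 2 * (u2 ^ 2 - κ ^ 2) * (p2 / n) ^ 2)
      / (u1 ^ 2 - u2 ^ 2) + α * u1 * u2 / (u1 + u2)


/-! The system is of Stäckel type. With `Sᵢ(u, p) = (u² − κ²)(p/mᵢ)² + α u` (`m₁ = m`, `m₂ = n`),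
the integrals solve the separation relations `Sᵢ(uᵢ, pᵢ) = I₂ + uᵢ² I₁`, because
`α/(u₁ + u₂) = α(u₁ − u₂)/(u₁² − u₂²)` on the open set `u₁² ≠ u₂²`; as the bracket at a point only depends on the germs of its arguments
there, we may replace `I₁, I₂` by these solutions. For any `Sᵢ` depending on the `i`-th canonical
pair alone and any `aᵢ(uᵢ)` in place of `uᵢ²`, the solutions of `Sᵢ = I₂ + aᵢ I₁` Poisson-commute:
their partial derivatives are explicit in those of `Sᵢ` and `aᵢ`, and the bracket cancels
identically. -/

open Filter Topology

theorem poissonBracket_congr {F F' G G' : ℝ → ℝ → ℝ → ℝ → ℝ} {u1 u2 p1 p2 : ℝ}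
    (hF : ∀ᶠ q : ℝ × ℝ × ℝ × ℝ in 𝓝 (u1, u2, p1, p2),
      F q.1 q.2.1 q.2.2.1 q.2.2.2 = F' q.1 q.2.1 q.2.2.1 q.2.2.2)
    (hG : ∀ᶠ q : ℝ × ℝ × ℝ × ℝ in 𝓝 (u1, u2, p1, p2),
      G q.1 q.2.1 q.2.2.1 q.2.2.2 = G' q.1 q.2.1 q.2.2.1 q.2.2.2) :
    poissonBracket F G u1 u2 p1 p2 = poissonBracket F' G' u1 u2 p1 p2 := by
  have partials : ∀ H H' : ℝ → ℝ → ℝ → ℝ → ℝ,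
      (∀ᶠ q : ℝ × ℝ × ℝ × ℝ in 𝓝 (u1, u2, p1, p2),
        H q.1 q.2.1 q.2.2.1 q.2.2.2 = H' q.1 q.2.1 q.2.2.1 q.2.2.2) →
      deriv (fun x => H x u2 p1 p2) u1 = deriv (fun x => H' x u2 p1 p2) u1 ∧
      deriv (fun x => H u1 x p1 p2) u2 = deriv (fun x => H' u1 x p1 p2) u2 ∧
      deriv (fun x => H u1 u2 x p2) p1 = deriv (fun x => H' u1 u2 x p2) p1 ∧
      deriv (fun x => H u1 u2 p1 x) p2 = deriv (fun x => H' u1 u2 p1 x) p2 := by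
    intro H H' hH
    have along : ∀ γ : ℝ → ℝ × ℝ × ℝ × ℝ, Continuous γ → ∀ t, γ t = (u1, u2, p1, p2) →
        ∀ᶠ x in 𝓝 t, H (γ x).1 (γ x).2.1 (γ x).2.2.1 (γ x).2.2.2
          = H' (γ x).1 (γ x).2.1 (γ x).2.2.1 (γ x).2.2.2 :=
      fun γ hγ t ht => (hγ.tendsto' t _ ht).eventually hH
    exact ⟨EventuallyEq.deriv_eq (along (fun x => (x, u2, p1, p2)) (by fun_prop) u1 rfl),
      EventuallyEq.deriv_eq (along (fun x => (u1, x, p1, p2)) (by fun_prop) u2 rfl),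
      EventuallyEq.deriv_eq (along (fun x => (u1, u2, x, p2)) (by fun_prop) p1 rfl),
      EventuallyEq.deriv_eq (along (fun x => (u1, u2, p1, x)) (by fun_prop) p2 rfl)⟩
  obtain ⟨hF1, hF2, hF3, hF4⟩ := partials F F' hF
  obtain ⟨hG1, hG2, hG3, hG4⟩ := partials G G' hG
  simp only [poissonBracket, hF1, hF2, hF3, hF4, hG1, hG2, hG3, hG4]

/-- The integrals `I₁, I₂` solving the separation relations `Sᵢ(uᵢ, pᵢ) = I₂ + aᵢ(uᵢ) I₁`. -/
noncomputable def stackelI1 (a1 a2 : ℝ → ℝ) (S1 S2 : ℝ → ℝ → ℝ) : ℝ → ℝ → ℝ → ℝ → ℝ :=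
  fun u1 u2 p1 p2 => (S1 u1 p1 - S2 u2 p2) / (a1 u1 - a2 u2)

noncomputable def stackelI2 (a1 a2 : ℝ → ℝ) (S1 S2 : ℝ → ℝ → ℝ) : ℝ → ℝ → ℝ → ℝ → ℝ :=
  fun u1 u2 p1 p2 => (a1 u1 * S2 u2 p2 - a2 u2 * S1 u1 p1) / (a1 u1 - a2 u2)

theorem poissonBracket_stackelI1_stackelI2 {a1 a2 : ℝ → ℝ} {S1 S2 : ℝ → ℝ → ℝ}
    {u1 u2 p1 p2 : ℝ} (ha1 : DifferentiableAt ℝ a1 u1) (ha2 : DifferentiableAt ℝ a2 u2)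
    (hS1u : DifferentiableAt ℝ (fun x => S1 x p1) u1) (hS1p : DifferentiableAt ℝ (S1 u1) p1)
    (hS2u : DifferentiableAt ℝ (fun x => S2 x p2) u2) (hS2p : DifferentiableAt ℝ (S2 u2) p2)
    (hD : a1 u1 ≠ a2 u2) :
    poissonBracket (stackelI1 a1 a2 S1 S2) (stackelI2 a1 a2 S1 S2) u1 u2 p1 p2 = 0 := by
  set D := a1 u1 - a2 u2
  have hD : D ≠ 0 := sub_ne_zero.mpr hD
  set N1 := S1 u1 p1 - S2 u2 p2
  set N2 := a1 u1 * S2 u2 p2 - a2 u2 * S1 u1 p1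
  have hI1u1 : HasDerivAt (fun x => stackelI1 a1 a2 S1 S2 x u2 p1 p2)
      ((deriv (fun x => S1 x p1) u1 * D - N1 * deriv a1 u1) / D ^ 2) u1 :=
    (hS1u.hasDerivAt.sub_const _).div (ha1.hasDerivAt.sub_const _) hD
  have hI1u2 : HasDerivAt (fun x => stackelI1 a1 a2 S1 S2 u1 x p1 p2)
      ((-deriv (fun x => S2 x p2) u2 * D - N1 * -deriv a2 u2) / D ^ 2) u2 :=
    (hS2u.hasDerivAt.const_sub _).div (ha2.hasDerivAt.const_sub _) hD
  have hI1p1 : HasDerivAt (fun x => stackelI1 a1 a2 S1 S2 u1 u2 x p2)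
      (deriv (S1 u1) p1 / D) p1 :=
    (hS1p.hasDerivAt.sub_const _).div_const D
  have hI1p2 : HasDerivAt (fun x => stackelI1 a1 a2 S1 S2 u1 u2 p1 x)
      (-deriv (S2 u2) p2 / D) p2 :=
    (hS2p.hasDerivAt.const_sub _).div_const D
  have hI2u1 : HasDerivAt (fun x => stackelI2 a1 a2 S1 S2 x u2 p1 p2)
      (((deriv a1 u1 * S2 u2 p2 - a2 u2 * deriv (fun x => S1 x p1) u1) * D
        - N2 * deriv a1 u1) / D ^ 2) u1 :=
    ((ha1.hasDerivAt.mul_const _).sub (hS1u.hasDerivAt.const_mul _)).div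
      (ha1.hasDerivAt.sub_const _) hD
  have hI2u2 : HasDerivAt (fun x => stackelI2 a1 a2 S1 S2 u1 x p1 p2)
      (((a1 u1 * deriv (fun x => S2 x p2) u2 - deriv a2 u2 * S1 u1 p1) * D
        - N2 * -deriv a2 u2) / D ^ 2) u2 :=
    ((hS2u.hasDerivAt.const_mul _).sub (ha2.hasDerivAt.mul_const _)).div
      (ha2.hasDerivAt.const_sub _) hD
  have hI2p1 : HasDerivAt (fun x => stackelI2 a1 a2 S1 S2 u1 u2 x p2)
      (-(a2 u2 * deriv (S1 u1) p1) / D) p1 :=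
    ((hS1p.hasDerivAt.const_mul _).const_sub _).div_const D
  have hI2p2 : HasDerivAt (fun x => stackelI2 a1 a2 S1 S2 u1 u2 p1 x)
      (a1 u1 * deriv (S2 u2) p2 / D) p2 :=
    ((hS2p.hasDerivAt.const_mul _).sub_const _).div_const D
  rw [poissonBracket, hI1u1.deriv, hI1u2.deriv, hI1p1.deriv, hI1p2.deriv, hI2u1.deriv,
    hI2u2.deriv, hI2p1.deriv, hI2p2.deriv]
  field_simp
  ring

noncomputable def keplerSeparated (κ α c : ℝ) : ℝ → ℝ → ℝ :=
  fun u p => (u ^ 2 - κ ^ 2) * (p / c) ^ 2 + α * u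

section Kepler

variable {κ α m n u1 u2 p1 p2 : ℝ}

theorem add_ne_zero_and_sub_ne_zero_of_sq_ne_sq (h : u1 ^ 2 ≠ u2 ^ 2) :
    u1 + u2 ≠ 0 ∧ u1 - u2 ≠ 0 := by
  have : (u1 + u2) * (u1 - u2) ≠ 0 := by
    rwa [← sq_sub_sq, sub_ne_zero]
  exact mul_ne_zero_iff.mp this

theorem keplerI1mn_eq_stackelI1 (h : u1 ^ 2 ≠ u2 ^ 2) :
    keplerI1mn κ α m n u1 u2 p1 p2 = stackelI1 (· ^ 2) (· ^ 2)
      (keplerSeparated κ α m) (keplerSeparated κ α n) u1 u2 p1 p2 := by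
  obtain ⟨hsum, hdiff⟩ := add_ne_zero_and_sub_ne_zero_of_sq_ne_sq h
  simp only [keplerI1mn, stackelI1, keplerSeparated]
  field_simp
  ring

theorem keplerI2mn_eq_stackelI2 (h : u1 ^ 2 ≠ u2 ^ 2) :
    keplerI2mn κ α m n u1 u2 p1 p2 = stackelI2 (· ^ 2) (· ^ 2)
      (keplerSeparated κ α m) (keplerSeparated κ α n) u1 u2 p1 p2 := by
  obtain ⟨hsum, hdiff⟩ := add_ne_zero_and_sub_ne_zero_of_sq_ne_sq h
  simp only [keplerI2mn, stackelI2, keplerSeparated]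
  field_simp
  ring

end Kepler

theorem kepler_mn_integrals_commute_general (κ α m n : ℝ)
    (u1 u2 p1 p2 : ℝ) (hne : u1 ^ 2 ≠ u2 ^ 2) :
    poissonBracket (keplerI1mn κ α m n) (keplerI2mn κ α m n) u1 u2 p1 p2 = 0 := by
  have near : ∀ᶠ q : ℝ × ℝ × ℝ × ℝ in 𝓝 (u1, u2, p1, p2), q.1 ^ 2 ≠ q.2.1 ^ 2 :=
    (isOpen_ne_fun (by fun_prop) (by fun_prop)).mem_nhds hne
  rw [poissonBracket_congr (near.mono fun _ => keplerI1mn_eq_stackelI1)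
    (near.mono fun _ => keplerI2mn_eq_stackelI2)]
  exact poissonBracket_stackelI1_stackelI2 (by fun_prop) (by fun_prop)
    (by unfold keplerSeparated; fun_prop) (by unfold keplerSeparated; fun_prop)
    (by unfold keplerSeparated; fun_prop) (by unfold keplerSeparated; fun_prop) hne

/-- The symmetry-broken Kepler Hamiltonians Poisson-commute for all
nonzero constants `m`, `n`. -/
theorem kepler_mn_integrals_commute (κ α m n : ℝ) (hm : m ≠ 0) (hn : n ≠ 0)
    (u1 u2 p1 p2 : ℝ) (hne : u1 ^ 2 ≠ u2 ^ 2) (hsum : u1 + u2 ≠ 0) :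
    poissonBracket (keplerI1mn κ α m n) (keplerI2mn κ α m n) u1 u2 p1 p2 = 0 :=
  kepler_mn_integrals_commute_general κ α m n u1 u2 p1 p2 hne
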